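/- Let S = ℤ[a2001, a1200, a1110, a1101, a0210, M0, M1, N0, N1], w = a2001·a0210 + a1110·a1101, and let (q0, q1, q2, q3) = G(M0 + 2·N0, M1 + 2·N1, 0, 0) ∈ S⁴. Then: (i) every monomial of q0 whose degree in the variable M1 is strictly greater than 15 has coefficient divisible by 4, and the sum of the monomials of q0 of M1-degree exactly 15 is congruent to 2·w·a1200·a1101⁸·a0210²·M0¹²·M1¹⁵ modulo 4·S; (ii) every monomial of q1 whose degree in the variable M1 is strictly greater than 17 has coefficient divisible by 4, and the sum of the monomials of q1 of M1-degree exactly 17 is congruent to 2·a1200·a1101⁹·a0210³·M0¹⁰·M1¹⁷ modulo 4·S. -/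

import Mathlib

/- STATEMENT 13: the leading-term identities (eq_M0_new) and (eq_M1_new) from the
proof of Lemma 3.9 of the paper, specialized with third and fourth inputs zero.
S = ℤ[a2001, a1200, a1110, a1101, a0210, M0, M1, N0, N1] is realized as
MvPolynomial (Fin 9) ℤ, the variables in that order (indices 0,…,8; M0 = X 5,
M1 = X 6, N0 = X 7, N1 = X 8).  The degree of a monomial m in the variable M1 is
m 6.  "The sum of the monomials of q of M1-degree exactly d" is
∑ m ∈ q.support.filter (fun m => m 6 = d), monomial m (coeff m q).
The cubic f, the Blanc involution tuples σ1, σ2, σ3 and the composite substitution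
G = σ1 ∘ σ2 ∘ σ3 are defined below. -/

open MvPolynomial

noncomputable section

variable {A : Type} [CommRing A]

/-- The cubic form f = a2001·x0²x3 + a1200·x0x1² + a1110·x0x1x2 + a1101·x0x1x3 + a0210·x1²x2,
with coefficients a = (a2001, a1200, a1110, a1101, a0210) : Fin 5 → A. -/
def cub (a : Fin 5 → A) : MvPolynomial (Fin 4) A :=
  C (a 0) * X 0 ^ 2 * X 3 + C (a 1) * X 0 * X 1 ^ 2 + C (a 2) * X 0 * X 1 * X 2 +
    C (a 3) * X 0 * X 1 * X 3 + C (a 4) * X 1 ^ 2 * X 2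

/-- The Blanc involution tuple σ1 = (x0·∂f/∂x1, x1·∂f/∂x1 − 2f, x2·∂f/∂x1, x3·∂f/∂x1). -/
def sig1 (a : Fin 5 → A) : Fin 4 → MvPolynomial (Fin 4) A :=
  ![X 0 * pderiv 1 (cub a), X 1 * pderiv 1 (cub a) - 2 * cub a,
    X 2 * pderiv 1 (cub a), X 3 * pderiv 1 (cub a)]

/-- The Blanc involution tuple σ2. -/
def sig2 (a : Fin 5 → A) : Fin 4 → MvPolynomial (Fin 4) A :=
  ![X 0 * pderiv 2 (cub a), X 1 * pderiv 2 (cub a),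
    X 2 * pderiv 2 (cub a) - 2 * cub a, X 3 * pderiv 2 (cub a)]

/-- The Blanc involution tuple σ3. -/
def sig3 (a : Fin 5 → A) : Fin 4 → MvPolynomial (Fin 4) A :=
  ![X 0 * pderiv 3 (cub a), X 1 * pderiv 3 (cub a),
    X 2 * pderiv 3 (cub a), X 3 * pderiv 3 (cub a) - 2 * cub a]

/-- G(v) = σ1(σ2(σ3(v))): substitute v into σ3, the result into σ2, that into σ1. -/
def Gmap (a : Fin 5 → A) (v : Fin 4 → A) : Fin 4 → A :=
  fun i => eval (fun j => eval (fun k => eval v (sig3 a k)) (sig2 a j)) (sig1 a i)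

abbrev S₁₃ : Type := MvPolynomial (Fin 9) ℤ


set_option maxHeartbeats 3200000

def T (c : ℤ) (e0 e1 e2 e3 e4 e5 e6 e7 e8 : ℕ) : S₁₃ :=
  C c * X 0 ^ e0 * X 1 ^ e1 * X 2 ^ e2 * X 3 ^ e3 * X 4 ^ e4 * X 5 ^ e5 * X 6 ^ e6 * X 7 ^ e7 * X 8 ^ e8
def Um0 : S₁₃ := ((T (2) 0 0 0 1 0 2 0 0 1 + T (1) 0 0 0 1 0 2 1 0 0) + (T (2) 1 0 0 0 0 2 0 1 0 + T (1) 1 0 0 0 0 3 0 0 0))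
def Uj0 : S₁₃ := ((T (2) 0 0 0 1 0 0 0 2 1 + (T (1) 0 0 0 1 0 0 1 2 0 + T (2) 0 0 0 1 0 1 0 1 1)) + ((T (1) 0 0 0 1 0 1 1 1 0 + T (2) 1 0 0 0 0 0 0 3 0) + (T (3) 1 0 0 0 0 1 0 2 0 + T (1) 1 0 0 0 0 2 0 1 0)))
def Um1 : S₁₃ := ((T (2) 0 0 0 1 0 0 2 1 0 + T (1) 0 0 0 1 0 1 2 0 0) + (T (2) 1 0 0 0 0 2 0 0 1 + T (1) 1 0 0 0 0 2 1 0 0))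
def Uj1 : S₁₃ := (((T (2) 0 0 0 1 0 0 0 1 2 + T (2) 0 0 0 1 0 0 1 1 1) + (T (1) 0 0 0 1 0 1 0 0 2 + T (1) 0 0 0 1 0 1 1 0 1)) + ((T (2) 1 0 0 0 0 0 0 2 1 + T (1) 1 0 0 0 0 0 1 2 0) + (T (2) 1 0 0 0 0 1 0 1 1 + T (1) 1 0 0 0 0 1 1 1 0)))
def Um2 : S₁₃ := (0 : S₁₃)
def Uj2 : S₁₃ := (0 : S₁₃)
def Um3 : S₁₃ := T (2) 0 1 0 0 0 1 2 0 0
def Uj3 : S₁₃ := ((T (-4) 0 1 0 0 0 0 0 1 2 + (T (-4) 0 1 0 0 0 0 1 1 1 + T (-1) 0 1 0 0 0 0 2 1 0)) + (T (-2) 0 1 0 0 0 1 0 0 2 + (T (-2) 0 1 0 0 0 1 1 0 1 + T (-1) 0 1 0 0 0 1 2 0 0)))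
def tp0 : S₁₃ := ((((T (2) 0 0 0 3 1 4 4 0 1 + T (1) 0 0 0 3 1 4 5 0 0) + (T (2) 0 0 1 3 0 4 4 1 0 + T (1) 0 0 1 3 0 5 4 0 0)) + ((T (2) 1 0 0 2 1 4 4 1 0 + T (3) 1 0 0 2 1 5 4 0 0) + (T (2) 1 0 1 2 0 6 2 0 1 + T (3) 1 0 1 2 0 6 3 0 0))) + (((T (2) 2 0 0 1 1 6 2 0 1 + T (3) 2 0 0 1 1 6 3 0 0) + (T (2) 2 0 1 1 0 6 2 1 0 + T (3) 2 0 1 1 0 7 2 0 0)) + ((T (2) 3 0 0 0 1 6 2 1 0 + T (1) 3 0 0 0 1 7 2 0 0) + (T (2) 3 0 1 0 0 8 0 0 1 + T (1) 3 0 1 0 0 8 1 0 0))))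
def dd0 : S₁₃ := (((((T (2) 0 0 0 3 1 2 4 2 1 + T (1) 0 0 0 3 1 2 5 2 0) + (T (2) 0 0 0 3 1 3 4 1 1 + (T (1) 0 0 0 3 1 3 5 1 0 + T (2) 0 0 1 3 0 4 2 1 2))) + ((T (2) 0 0 1 3 0 4 3 1 1 + (T (1) 0 0 1 3 0 5 2 0 2 + T (1) 0 0 1 3 0 5 3 0 1)) + (T (2) 1 0 0 2 1 2 4 3 0 + (T (3) 1 0 0 2 1 3 4 2 0 + T (4) 1 0 0 2 1 4 2 1 2)))) + (((T (4) 1 0 0 2 1 4 3 1 1 + T (2) 1 0 0 2 1 4 4 1 0) + (T (2) 1 0 0 2 1 5 2 0 2 + (T (2) 1 0 0 2 1 5 3 0 1 + T (4) 1 0 1 2 0 4 2 2 1))) + ((T (2) 1 0 1 2 0 4 3 2 0 + (T (4) 1 0 1 2 0 5 2 1 1 + T (2) 1 0 1 2 0 5 3 1 0)) + (T (2) 1 0 1 2 0 6 0 0 3 + (T (3) 1 0 1 2 0 6 1 0 2 + T (2) 1 0 1 2 0 6 2 0 1))))) + ((((T (4) 2 0 0 1 1 4 2 2 1 + T (2)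 2 0 0 1 1 4 3 2 0) + (T (4) 2 0 0 1 1 5 2 1 1 + (T (2) 2 0 0 1 1 5 3 1 0 + T (2) 2 0 0 1 1 6 0 0 3))) + ((T (3) 2 0 0 1 1 6 1 0 2 + (T (2) 2 0 0 1 1 6 2 0 1 + T (2) 2 0 1 1 0 4 2 3 0)) + (T (3) 2 0 1 1 0 5 2 2 0 + (T (4) 2 0 1 1 0 6 0 1 2 + T (4) 2 0 1 1 0 6 1 1 1)))) + (((T (2) 2 0 1 1 0 6 2 1 0 + T (2) 2 0 1 1 0 7 0 0 2) + (T (2) 2 0 1 1 0 7 1 0 1 + (T (2) 3 0 0 0 1 6 0 1 2 + T (2) 3 0 0 0 1 6 1 1 1))) + ((T (1) 3 0 0 0 1 7 0 0 2 + (T (1) 3 0 0 0 1 7 1 0 1 + T (2) 3 0 1 0 0 6 0 2 1)) + (T (1) 3 0 1 0 0 6 1 2 0 + (T (2) 3 0 1 0 0 7 0 1 1 + T (1) 3 0 1 0 0 7 1 1 0))))))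
def tp1 : S₁₃ := ((((T (2) 0 0 0 3 1 2 6 1 0 + T (1) 0 0 0 3 1 3 6 0 0) + (T (2) 0 0 1 3 0 4 4 0 1 + T (1) 0 0 1 3 0 4 5 0 0)) + ((T (2) 1 0 0 2 1 4 4 0 1 + T (3) 1 0 0 2 1 4 5 0 0) + (T (2) 1 0 1 2 0 4 4 1 0 + T (3) 1 0 1 2 0 5 4 0 0))) + (((T (2) 2 0 0 1 1 4 4 1 0 + T (3) 2 0 0 1 1 5 4 0 0) + (T (2) 2 0 1 1 0 6 2 0 1 + T (3) 2 0 1 1 0 6 3 0 0)) + ((T (2) 3 0 0 0 1 6 2 0 1 + T (1) 3 0 0 0 1 6 3 0 0) + (T (2) 3 0 1 0 0 6 2 1 0 + T (1) 3 0 1 0 0 7 2 0 0))))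
def dd1 : S₁₃ := (((((T (2) 0 0 0 3 1 0 6 3 0 + T (3) 0 0 0 3 1 1 6 2 0) + (T (1) 0 0 0 3 1 2 6 1 0 + T (2) 0 0 1 3 0 2 4 2 1)) + ((T (1) 0 0 1 3 0 2 5 2 0 + T (2) 0 0 1 3 0 3 4 1 1) + (T (1) 0 0 1 3 0 3 5 1 0 + (T (6) 1 0 0 2 1 2 4 2 1 + T (3) 1 0 0 2 1 2 5 2 0)))) + (((T (6) 1 0 0 2 1 3 4 1 1 + T (3) 1 0 0 2 1 3 5 1 0) + (T (1) 1 0 0 2 1 4 4 0 1 + (T (2) 1 0 1 2 0 2 4 3 0 + T (3) 1 0 1 2 0 3 4 2 0))) + ((T (4) 1 0 1 2 0 4 2 1 2 + T (4) 1 0 1 2 0 4 3 1 1) + (T (2) 1 0 1 2 0 4 4 1 0 + (T (2) 1 0 1 2 0 5 2 0 2 + T (2) 1 0 1 2 0 5 3 0 1))))) + ((((T (6) 2 0 0 1 1 4 2 1 2 + T (6) 2 0 0 1 1 4 3 1 1) + (T (1) 2 0 0 1 1 4 4 1 0 + T (3) 2 0 0 1 1 5 2 0 2)) + ((T (3) 2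 0 0 1 1 5 3 0 1 + T (4) 2 0 1 1 0 4 2 2 1) + (T (2) 2 0 1 1 0 4 3 2 0 + (T (4) 2 0 1 1 0 5 2 1 1 + T (2) 2 0 1 1 0 5 3 1 0)))) + (((T (2) 2 0 1 1 0 6 0 0 3 + T (3) 2 0 1 1 0 6 1 0 2) + (T (2) 2 0 1 1 0 6 2 0 1 + (T (2) 3 0 0 0 1 6 0 0 3 + T (3) 3 0 0 0 1 6 1 0 2))) + ((T (1) 3 0 0 0 1 6 2 0 1 + T (2) 3 0 1 0 0 6 0 1 2) + (T (2) 3 0 1 0 0 6 1 1 1 + (T (1) 3 0 1 0 0 7 0 0 2 + T (1) 3 0 1 0 0 7 1 0 1))))))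
def tp2 : S₁₃ := ((T (2) 0 1 0 3 0 4 5 0 0 + T (2) 1 1 0 2 0 5 4 0 0) + (T (2) 2 1 0 1 0 6 3 0 0 + T (2) 3 1 0 0 0 7 2 0 0))
def dd2 : S₁₃ := ((((T (-4) 0 1 0 3 0 2 4 2 1 + (T (-2) 0 1 0 3 0 2 5 2 0 + T (-8) 0 1 0 3 0 3 4 1 1)) + ((T (-4) 0 1 0 3 0 3 5 1 0 + T (-3) 0 1 0 3 0 4 4 0 1) + (T (-2) 0 1 0 3 0 4 5 0 0 + T (-4) 1 1 0 2 0 2 4 3 0))) + ((T (-10) 1 1 0 2 0 3 4 2 0 + (T (-8) 1 1 0 2 0 4 2 1 2 + T (-8) 1 1 0 2 0 4 3 1 1)) + ((T (-9) 1 1 0 2 0 4 4 1 0 + T (-12) 1 1 0 2 0 5 2 0 2) + (T (-12) 1 1 0 2 0 5 3 0 1 + T (-5) 1 1 0 2 0 5 4 0 0)))) + (((T (-8) 2 1 0 1 0 4 2 2 1 + (T (-4) 2 1 0 1 0 4 3 2 0 + T (-20) 2 1 0 1 0 5 2 1 1)) + ((T (-10) 2 1 0 1 0 5 3 1 0 +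 T (-4) 2 1 0 1 0 6 0 0 3) + (T (-6) 2 1 0 1 0 6 1 0 2 + T (-11) 2 1 0 1 0 6 2 0 1))) + (((T (-5) 2 1 0 1 0 6 3 0 0 + T (-4) 3 1 0 0 0 5 2 2 0) + (T (-4) 3 1 0 0 0 6 0 1 2 + T (-4) 3 1 0 0 0 6 1 1 1)) + ((T (-5) 3 1 0 0 0 6 2 1 0 + T (-2) 3 1 0 0 0 7 0 0 2) + (T (-2) 3 1 0 0 0 7 1 0 1 + T (-2) 3 1 0 0 0 7 2 0 0)))))
def tp3 : S₁₃ := ((T (2) 0 1 0 2 1 3 6 0 0 + T (2) 0 1 1 2 0 4 5 0 0) + (T (2) 2 1 0 0 1 5 4 0 0 + T (2) 2 1 1 0 0 6 3 0 0))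
def dd3 : S₁₃ := ((((T (2) 0 1 0 2 1 1 6 2 0 + T (2) 0 1 0 2 1 2 6 1 0) + (T (2) 0 1 1 2 0 3 4 1 1 + T (1) 0 1 1 2 0 3 5 1 0)) + ((T (1) 0 1 1 2 0 4 4 0 1 + T (4) 1 1 0 1 1 3 4 1 1) + (T (2) 1 1 0 1 1 3 5 1 0 + (T (2) 1 1 0 1 1 4 4 0 1 + T (1) 1 1 0 1 1 4 5 0 0)))) + (((T (2) 1 1 1 1 0 3 4 2 0 + T (2) 1 1 1 1 0 4 4 1 0) + (T (2) 1 1 1 1 0 5 2 0 2 + (T (2) 1 1 1 1 0 5 3 0 1 + T (1) 1 1 1 1 0 5 4 0 0))) + ((T (2) 2 1 0 0 1 5 2 0 2 + T (2) 2 1 0 0 1 5 3 0 1) + (T (2) 2 1 1 0 0 5 2 1 1 + (T (1) 2 1 1 0 0 5 3 1 0 + T (1) 2 1 1 0 0 6 2 0 1)))))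
def qp0 : S₁₃ := (((T (2) 0 1 1 9 2 12 15 0 0 + T (2) 0 1 3 9 0 14 13 0 0) + (T (2) 1 1 0 8 3 12 15 0 0 + T (2) 1 1 2 8 1 14 13 0 0)) + ((T (2) 8 1 1 1 2 20 7 0 0 + T (2) 8 1 3 1 0 22 5 0 0) + (T (2) 9 1 0 0 3 20 7 0 0 + T (2) 9 1 2 0 1 22 5 0 0)))
def ee0 : S₁₃ := ((((((((T (4) 0 1 0 9 3 10 14 1 2 + T (8) 0 1 0 9 3 10 15 1 1) + (T (3) 0 1 0 9 3 10 16 1 0 + T (4) 0 1 0 9 3 11 14 0 2)) + ((T (6) 0 1 0 9 3 11 15 0 1 + T (2) 0 1 0 9 3 11 16 0 0) + (T (8) 0 1 1 9 2 10 14 2 1 + (T (8) 0 1 1 9 2 10 15 2 0 + T (12) 0 1 1 9 2 11 14 1 1)))) + (((T (10) 0 1 1 9 2 11 15 1 0 + T (4) 0 1 1 9 2 12 12 0 3) + (T (14) 0 1 1 9 2 12 13 0 2 + (T (15) 0 1 1 9 2 12 14 0 1 + T (5) 0 1 1 9 2 12 15 0 0))) + ((T (4) 0 1 2 9 1 10 14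 3 0 + T (8) 0 1 2 9 1 11 14 2 0) + (T (8) 0 1 2 9 1 12 12 1 2 + (T (20) 0 1 2 9 1 12 13 1 1 + T (13) 0 1 2 9 1 12 14 1 0))))) + ((((T (4) 0 1 2 9 1 13 12 0 2 + T (10) 0 1 2 9 1 13 13 0 1) + (T (5) 0 1 2 9 1 13 14 0 0 + (T (4) 0 1 3 9 0 12 12 2 1 + T (6) 0 1 3 9 0 12 13 2 0))) + ((T (4) 0 1 3 9 0 13 12 1 1 + T (6) 0 1 3 9 0 13 13 1 0) + (T (1) 0 1 3 9 0 14 12 0 1 + (T (1) 0 1 3 9 0 14 13 0 0 + T (8) 1 1 0 8 3 10 14 2 1)))) + (((T (8) 1 1 0 8 3 10 15 2 0 + T (24) 1 1 0 8 3 11 14 1 1) + (T (20) 1 1 0 8 3 11 15 1 0 + (T (4) 1 1 0 8 3 12 12 0 3 + T (14) 1 1 0 8 3 12 13 0 2))) + ((T (29) 1 1 0 8 3 12 14 0 1 + T (14) 1 1 0 8 3 12 15 0 0) + (T (8) 1 1 1 8 2 10 14 3 0 + (T (28) 1 1 1 8 2 11 14 2 0 + T (28) 1 1 1 8 2 12 12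 1 2)))))) + (((((T (68) 1 1 1 8 2 12 13 1 1 + T (61) 1 1 1 8 2 12 14 1 0) + (T (36) 1 1 1 8 2 13 12 0 2 + T (76) 1 1 1 8 2 13 13 0 1)) + ((T (40) 1 1 1 8 2 13 14 0 0 + T (28) 1 1 2 8 1 12 12 2 1) + (T (38) 1 1 2 8 1 12 13 2 0 + (T (56) 1 1 2 8 1 13 12 1 1 + T (68) 1 1 2 8 1 13 13 1 0)))) + (((T (8) 1 1 2 8 1 14 10 0 3 + T (32) 1 1 2 8 1 14 11 0 2) + (T (59) 1 1 2 8 1 14 12 0 1 + (T (36) 1 1 2 8 1 14 13 0 0 + T (4) 1 1 3 8 0 12 12 3 0))) + ((T (12) 1 1 3 8 0 13 12 2 0 + T (8) 1 1 3 8 0 14 10 1 2) + (T (24) 1 1 3 8 0 14 11 1 1 + (T (27) 1 1 3 8 0 14 12 1 0 + T (4) 1 1 3 8 0 15 10 0 2))))) + ((((T (12) 1 1 3 8 0 15 11 0 1 + T (11) 1 1 3 8 0 15 12 0 0) + (T (4) 2 1 0 7 3 10 14 3 0 + (T (20) 2 1 0 7 3 11 14 2 0 + T (20) 2 1 0 7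 3 12 12 1 2))) + ((T (52) 2 1 0 7 3 12 13 1 1 + T (58) 2 1 0 7 3 12 14 1 0) + (T (32) 2 1 0 7 3 13 12 0 2 + (T (72) 2 1 0 7 3 13 13 0 1 + T (48) 2 1 0 7 3 13 14 0 0)))) + (((T (52) 2 1 1 7 2 12 12 2 1 + T (70) 2 1 1 7 2 12 13 2 0) + (T (144) 2 1 1 7 2 13 12 1 1 + (T (172) 2 1 1 7 2 13 13 1 0 + T (20) 2 1 1 7 2 14 10 0 3))) + ((T (86) 2 1 1 7 2 14 11 0 2 + T (194) 2 1 1 7 2 14 12 0 1) + (T (133) 2 1 1 7 2 14 13 0 0 + (T (20) 2 1 2 7 1 12 12 3 0 + T (72) 2 1 2 7 1 13 12 2 0))))))) + ((((((T (52) 2 1 2 7 1 14 10 1 2 + T (156) 2 1 2 7 1 14 11 1 1) + (T (178) 2 1 2 7 1 14 12 1 0 + T (60) 2 1 2 7 1 15 10 0 2)) + ((T (164) 2 1 2 7 1 15 11 0 1 + T (122) 2 1 2 7 1 15 12 0 0) + (T (20) 2 1 3 7 0 14 10 2 1 + (T (34) 2 1 3 7 0 14 11 2 0 + T (40) 2 1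 3 7 0 15 10 1 1)))) + (((T (64) 2 1 3 7 0 15 11 1 0 + T (4) 2 1 3 7 0 16 8 0 3) + (T (18) 2 1 3 7 0 16 9 0 2 + (T (42) 2 1 3 7 0 16 10 0 1 + T (37) 2 1 3 7 0 16 11 0 0))) + ((T (28) 3 1 0 6 3 12 12 2 1 + T (38) 3 1 0 6 3 12 13 2 0) + (T (88) 3 1 0 6 3 13 12 1 1 + (T (108) 3 1 0 6 3 13 13 1 0 + T (12) 3 1 0 6 3 14 10 0 3))))) + ((((T (46) 3 1 0 6 3 14 11 0 2 + T (122) 3 1 0 6 3 14 12 0 1) + (T (97) 3 1 0 6 3 14 13 0 0 + (T (28) 3 1 1 6 2 12 12 3 0 + T (116) 3 1 1 6 2 13 12 2 0))) + ((T (92) 3 1 1 6 2 14 10 1 2 + T (252) 3 1 1 6 2 14 11 1 1) + (T (314) 3 1 1 6 2 14 12 1 0 + (T (128) 3 1 1 6 2 15 10 0 2 + T (336) 3 1 1 6 2 15 11 0 1)))) + (((T (270) 3 1 1 6 2 15 12 0 0 + T (92) 3 1 2 6 1 14 10 2 1) + (T (130) 3 1 2 6 1 14 11 2 0 + (T (224)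 3 1 2 6 1 15 10 1 1 + T (312) 3 1 2 6 1 15 11 1 0))) + ((T (28) 3 1 2 6 1 16 8 0 3 + T (122) 3 1 2 6 1 16 9 0 2) + (T (298) 3 1 2 6 1 16 10 0 1 + (T (249) 3 1 2 6 1 16 11 0 0 + T (12) 3 1 3 6 0 14 10 3 0)))))) + (((((T (40) 3 1 3 6 0 15 10 2 0 + T (28) 3 1 3 6 0 16 8 1 2) + (T (84) 3 1 3 6 0 16 9 1 1 + T (106) 3 1 3 6 0 16 10 1 0)) + ((T (28) 3 1 3 6 0 17 8 0 2 + T (84) 3 1 3 6 0 17 9 0 1) + (T (76) 3 1 3 6 0 17 10 0 0 + (T (12) 4 1 0 5 3 12 12 3 0 + T (56) 4 1 0 5 3 13 12 2 0)))) + (((T (36) 4 1 0 5 3 14 10 1 2 + T (100) 4 1 0 5 3 14 11 1 1) + (T (148) 4 1 0 5 3 14 12 1 0 + (T (60) 4 1 0 5 3 15 10 0 2 + T (152) 4 1 0 5 3 15 11 0 1))) + ((T (134) 4 1 0 5 3 15 12 0 0 + T (108) 4 1 1 5 2 14 10 2 1) + (T (150) 4 1 1 5 2 14 11 2 0 + (T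 (320) 4 1 1 5 2 15 10 1 1 + T (420) 4 1 1 5 2 15 11 1 0))))) + ((((T (36) 4 1 1 5 2 16 8 0 3 + T (154) 4 1 1 5 2 16 9 0 2) + (T (428) 4 1 1 5 2 16 10 0 1 + (T (374) 4 1 1 5 2 16 11 0 0 + T (36) 4 1 2 5 1 14 10 3 0))) + ((T (148) 4 1 2 5 1 15 10 2 0 + T (108) 4 1 2 5 1 16 8 1 2) + (T (308) 4 1 2 5 1 16 9 1 1 + (T (400) 4 1 2 5 1 16 10 1 0 + T (144) 4 1 2 5 1 17 8 0 2)))) + (((T (396) 4 1 2 5 1 17 9 0 1 + T (346) 4 1 2 5 1 17 10 0 0) + (T (36) 4 1 3 5 0 16 8 2 1 + (T (54) 4 1 3 5 0 16 9 2 0 + T (88) 4 1 3 5 0 17 8 1 1))) + ((T (128) 4 1 3 5 0 17 9 1 0 + T (12) 4 1 3 5 0 18 6 0 3) + (T (50) 4 1 3 5 0 18 7 0 2 + (T (120) 4 1 3 5 0 18 8 0 1 + T (106) 4 1 3 5 0 18 9 0 0)))))))) + (((((((T (36) 5 1 0 4 3 14 10 2 1 + T (54) 5 1 0 4 3 14 11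 2 0) + (T (112) 5 1 0 4 3 15 10 1 1 + T (152) 5 1 0 4 3 15 11 1 0)) + ((T (12) 5 1 0 4 3 16 8 0 3 + T (50) 5 1 0 4 3 16 9 0 2) + (T (144) 5 1 0 4 3 16 10 0 1 + (T (132) 5 1 0 4 3 16 11 0 0 + T (36) 5 1 1 4 2 14 10 3 0)))) + (((T (160) 5 1 1 4 2 15 10 2 0 + T (108) 5 1 1 4 2 16 8 1 2) + (T (308) 5 1 1 4 2 16 9 1 1 + (T (424) 5 1 1 4 2 16 10 1 0 + T (156) 5 1 1 4 2 17 8 0 2))) + ((T (412) 5 1 1 4 2 17 9 0 1 + T (368) 5 1 1 4 2 17 10 0 0) + (T (108) 5 1 2 4 1 16 8 2 1 + (T (150) 5 1 2 4 1 16 9 2 0 + T (296) 5 1 2 4 1 17 8 1 1))))) + ((((T (388) 5 1 2 4 1 17 9 1 0 + T (36) 5 1 2 4 1 18 6 0 3) + (T (154) 5 1 2 4 1 18 7 0 2 + (T (396) 5 1 2 4 1 18 8 0 1 + T (340) 5 1 2 4 1 18 9 0 0))) + ((T (12) 5 1 3 4 0 16 8 3 0 + T (44) 5 1 3 4 0 17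 8 2 0) + (T (36) 5 1 3 4 0 18 6 1 2 + (T (100) 5 1 3 4 0 18 7 1 1 + T (116) 5 1 3 4 0 18 8 1 0)))) + (((T (48) 5 1 3 4 0 19 6 0 2 + T (128) 5 1 3 4 0 19 7 0 1) + (T (104) 5 1 3 4 0 19 8 0 0 + (T (12) 6 1 0 3 3 14 10 3 0 + T (52) 6 1 0 3 3 15 10 2 0))) + ((T (28) 6 1 0 3 3 16 8 1 2 + T (76) 6 1 0 3 3 16 9 1 1) + (T (118) 6 1 0 3 3 16 10 1 0 + (T (40) 6 1 0 3 3 17 8 0 2 + T (104) 6 1 0 3 3 17 9 0 1)))))) + (((((T (92) 6 1 0 3 3 17 10 0 0 + T (92) 6 1 1 3 2 16 8 2 1) + (T (122) 6 1 1 3 2 16 9 2 0 + T (256) 6 1 1 3 2 17 8 1 1)) + ((T (324) 6 1 1 3 2 17 9 1 0 + T (28) 6 1 1 3 2 18 6 0 3) + (T (106) 6 1 1 3 2 18 7 0 2 + (T (302) 6 1 1 3 2 18 8 0 1 + T (255) 6 1 1 3 2 18 9 0 0)))) + (((T (28) 6 1 2 3 1 16 8 3 0 + T (112) 6 1 2 3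 1 17 8 2 0) + (T (92) 6 1 2 3 1 18 6 1 2 + (T (228) 6 1 2 3 1 18 7 1 1 + T (286) 6 1 2 3 1 18 8 1 0))) + ((T (124) 6 1 2 3 1 19 6 0 2 + T (300) 6 1 2 3 1 19 7 0 1) + (T (234) 6 1 2 3 1 19 8 0 0 + (T (28) 6 1 3 3 0 18 6 2 1 + T (30) 6 1 3 3 0 18 7 2 0))))) + ((((T (72) 6 1 3 3 0 19 6 1 1 + T (80) 6 1 3 3 0 19 7 1 0) + (T (12) 6 1 3 3 0 20 4 0 3 + (T (46) 6 1 3 3 0 20 5 0 2 + T (102) 6 1 3 3 0 20 6 0 1))) + ((T (71) 6 1 3 3 0 20 7 0 0 + T (20) 7 1 0 2 3 16 8 2 1) + (T (26) 7 1 0 2 3 16 9 2 0 + (T (56) 7 1 0 2 3 17 8 1 1 + T (68) 7 1 0 2 3 17 9 1 0)))) + (((T (4) 7 1 0 2 3 18 6 0 3 + T (18) 7 1 0 2 3 18 7 0 2) + (T (54) 7 1 0 2 3 18 8 0 1 + (T (43) 7 1 0 2 3 18 9 0 0 + T (20) 7 1 1 2 2 16 8 3 0))) + ((T (84) 7 1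 1 2 2 17 8 2 0 + T (52) 7 1 1 2 2 18 6 1 2) + (T (132) 7 1 1 2 2 18 7 1 1 + (T (182) 7 1 1 2 2 18 8 1 0 + T (72) 7 1 1 2 2 19 6 0 2))))))) + ((((((T (160) 7 1 1 2 2 19 7 0 1 + T (118) 7 1 1 2 2 19 8 0 0) + (T (52) 7 1 2 2 1 18 6 2 1 + T (62) 7 1 2 2 1 18 7 2 0)) + ((T (144) 7 1 2 2 1 19 6 1 1 + T (152) 7 1 2 2 1 19 7 1 0) + (T (20) 7 1 2 2 1 20 4 0 3 + (T (70) 7 1 2 2 1 20 5 0 2 + T (166) 7 1 2 2 1 20 6 0 1)))) + (((T (107) 7 1 2 2 1 20 7 0 0 + T (4) 7 1 3 2 0 18 6 3 0) + (T (16) 7 1 3 2 0 19 6 2 0 + (T (20) 7 1 3 2 0 20 4 1 2 + T (44) 7 1 3 2 0 20 5 1 1))) + ((T (38) 7 1 3 2 0 20 6 1 0 + T (28) 7 1 3 2 0 21 4 0 2) + (T (60) 7 1 3 2 0 21 5 0 1 + (T (32) 7 1 3 2 0 21 6 0 0 + T (4) 8 1 0 1 3 16 8 3 0))))) + ((((T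 (16) 8 1 0 1 3 17 8 2 0 + T (8) 8 1 0 1 3 18 6 1 2) + (T (20) 8 1 0 1 3 18 7 1 1 + (T (25) 8 1 0 1 3 18 8 1 0 + T (8) 8 1 0 1 3 19 6 0 2))) + ((T (18) 8 1 0 1 3 19 7 0 1 + T (12) 8 1 0 1 3 19 8 0 0) + (T (28) 8 1 1 1 2 18 6 2 1 + (T (34) 8 1 1 1 2 18 7 2 0 + T (68) 8 1 1 1 2 19 6 1 1)))) + (((T (66) 8 1 1 1 2 19 7 1 0 + T (8) 8 1 1 1 2 20 4 0 3) + (T (24) 8 1 1 1 2 20 5 0 2 + (T (53) 8 1 1 1 2 20 6 0 1 + T (32) 8 1 1 1 2 20 7 0 0))) + ((T (8) 8 1 2 1 1 18 6 3 0 + T (28) 8 1 2 1 1 19 6 2 0) + (T (28) 8 1 2 1 1 20 4 1 2 + (T (56) 8 1 2 1 1 20 5 1 1 + T (51) 8 1 2 1 1 20 6 1 0)))))) + (((((T (36) 8 1 2 1 1 21 4 0 2 + T (58) 8 1 2 1 1 21 5 0 1) + (T (29) 8 1 2 1 1 21 6 0 0 + T (8) 8 1 3 1 0 20 4 2 1))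 + ((T (4) 8 1 3 1 0 20 5 2 0 + T (20) 8 1 3 1 0 21 4 1 1) + (T (10) 8 1 3 1 0 21 5 1 0 + (T (4) 8 1 3 1 0 22 2 0 3 + T (14) 8 1 3 1 0 22 3 0 2)))) + (((T (23) 8 1 3 1 0 22 4 0 1 + T (8) 8 1 3 1 0 22 5 0 0) + (T (4) 9 1 0 0 3 18 6 2 1 + (T (2) 9 1 0 0 3 18 7 2 0 + T (8) 9 1 0 0 3 19 6 1 1))) + ((T (4) 9 1 0 0 3 19 7 1 0 + T (3) 9 1 0 0 3 20 6 0 1) + (T (1) 9 1 0 0 3 20 7 0 0 + (T (4) 9 1 1 0 2 18 6 3 0 + T (12) 9 1 1 0 2 19 6 2 0))))) + ((((T (8) 9 1 1 0 2 20 4 1 2 + T (8) 9 1 1 0 2 20 5 1 1) + (T (11) 9 1 1 0 2 20 6 1 0 + (T (8) 9 1 1 0 2 21 4 0 2 + T (8) 9 1 1 0 2 21 5 0 1))) + ((T (4) 9 1 1 0 2 21 6 0 0 + T (8) 9 1 2 0 1 20 4 2 1) + (T (4) 9 1 2 0 1 20 5 2 0 + (T (16) 9 1 2 0 1 21 4 1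 1 + T (8) 9 1 2 0 1 21 5 1 0)))) + (((T (4) 9 1 2 0 1 22 2 0 3 + T (6) 9 1 2 0 1 22 3 0 2) + (T (9) 9 1 2 0 1 22 4 0 1 + (T (3) 9 1 2 0 1 22 5 0 0 + T (4) 9 1 3 0 0 22 2 1 2))) + ((T (4) 9 1 3 0 0 22 3 1 1 + T (1) 9 1 3 0 0 22 4 1 0) + (T (4) 9 1 3 0 0 23 2 0 2 + (T (4) 9 1 3 0 0 23 3 0 1 + T (1) 9 1 3 0 0 23 4 0 0)))))))))
def qp1 : S₁₃ := (((T (2) 0 1 0 9 3 10 17 0 0 + T (2) 0 1 2 9 1 12 15 0 0) + (T (2) 1 1 1 8 2 12 15 0 0 + T (2) 1 1 3 8 0 14 13 0 0)) + ((T (2) 8 1 0 1 3 18 9 0 0 + T (2) 8 1 2 1 1 20 7 0 0) + (T (2) 9 1 1 0 2 20 7 0 0 + T (2) 9 1 3 0 0 22 5 0 0)))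
def ee1 : S₁₃ := (((((((T (-2) 0 1 0 9 3 9 16 1 1 + (T (-1) 0 1 0 9 3 9 17 1 0 + T (-1) 0 1 0 9 3 10 16 0 1)) + (T (-1) 0 1 0 9 3 10 17 0 0 + (T (-2) 0 1 1 9 2 9 16 2 0 + T (-4) 0 1 1 9 2 10 15 1 1))) + ((T (-4) 0 1 1 9 2 10 16 1 0 + (T (-2) 0 1 1 9 2 11 14 0 2 + T (-4) 0 1 1 9 2 11 15 0 1)) + ((T (-2) 0 1 1 9 2 11 16 0 0 + T (-4) 0 1 2 9 1 10 15 2 0) + (T (-2) 0 1 2 9 1 11 14 1 1 + T (-5) 0 1 2 9 1 11 15 1 0)))) + (((T (-4) 0 1 2 9 1 12 13 0 2 + (T (-5) 0 1 2 9 1 12 14 0 1 + T (-3) 0 1 2 9 1 12 15 0 0)) + ((T (-4) 0 1 3 9 0 12 13 1 1 + T (-2) 0 1 3 9 0 12 14 1 0) + (T (-2) 0 1 3 9 0 13 13 0 1 + T (-1) 0 1 3 9 0 13 14 0 0))) + ((T (-2) 1 1 0 8 3 9 16 2 0 + (T (-4) 1 1 0 8 3 10 16 1 0 + T (-6) 1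 1 0 8 3 11 14 0 2)) + ((T (-8) 1 1 0 8 3 11 15 0 1 + T (-4) 1 1 0 8 3 11 16 0 0) + (T (-4) 1 1 1 8 2 10 15 2 0 + T (-18) 1 1 1 8 2 11 14 1 1))))) + ((((T (-21) 1 1 1 8 2 11 15 1 0 + (T (-8) 1 1 1 8 2 12 13 0 2 + T (-25) 1 1 1 8 2 12 14 0 1)) + (T (-16) 1 1 1 8 2 12 15 0 0 + (T (-8) 1 1 2 8 1 11 14 2 0 + T (-24) 1 1 2 8 1 12 13 1 1))) + ((T (-30) 1 1 2 8 1 12 14 1 0 + (T (-4) 1 1 2 8 1 13 12 0 2 + T (-26) 1 1 2 8 1 13 13 0 1)) + ((T (-19) 1 1 2 8 1 13 14 0 0 + T (-8) 1 1 3 8 0 12 13 2 0) + (T (-2) 1 1 3 8 0 13 12 1 1 + T (-13) 1 1 3 8 0 13 13 1 0)))) + (((T (-4) 1 1 3 8 0 14 11 0 2 + (T (-9) 1 1 3 8 0 14 12 0 1 + T (-8) 1 1 3 8 0 14 13 0 0)) + ((T (-16) 2 1 0 7 3 11 14 1 1 + T (-12) 2 1 0 7 3 11 15 1 0) + (T (-20)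 2 1 0 7 3 12 14 0 1 + T (-14) 2 1 0 7 3 12 15 0 0))) + ((T (-18) 2 1 1 7 2 11 14 2 0 + (T (-24) 2 1 1 7 2 12 13 1 1 + T (-56) 2 1 1 7 2 12 14 1 0)) + ((T (-18) 2 1 1 7 2 13 12 0 2 + T (-64) 2 1 1 7 2 13 13 0 1) + (T (-53) 2 1 1 7 2 13 14 0 0 + T (-24) 2 1 2 7 1 12 13 2 0)))))) + (((((T (-24) 2 1 2 7 1 13 12 1 1 + (T (-76) 2 1 2 7 1 13 13 1 0 + T (-24) 2 1 2 7 1 14 11 0 2)) + (T (-68) 2 1 2 7 1 14 12 0 1 + (T (-64) 2 1 2 7 1 14 13 0 0 + T (-2) 2 1 3 7 0 13 12 2 0))) + ((T (-24) 2 1 3 7 0 14 11 1 1 + (T (-32) 2 1 3 7 0 14 12 1 0 + T (-2) 2 1 3 7 0 15 10 0 2)) + ((T (-24) 2 1 3 7 0 15 11 0 1 + T (-25) 2 1 3 7 0 15 12 0 0) + (T (-10) 3 1 0 6 3 11 14 2 0 + T (-24) 3 1 0 6 3 12 14 1 0)))) + (((T (-18) 3 1 0 6 3 13 12 0 2 +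 (T (-32) 3 1 0 6 3 13 13 0 1 + T (-29) 3 1 0 6 3 13 14 0 0)) + ((T (-16) 3 1 1 6 2 12 13 2 0 + T (-64) 3 1 1 6 2 13 12 1 1) + (T (-100) 3 1 1 6 2 13 13 1 0 + T (-24) 3 1 1 6 2 14 11 0 2))) + ((T (-108) 3 1 1 6 2 14 12 0 1 + (T (-108) 3 1 1 6 2 14 13 0 0 + T (-26) 3 1 2 6 1 13 12 2 0)) + ((T (-80) 3 1 2 6 1 14 11 1 1 + T (-128) 3 1 2 6 1 14 12 1 0) + (T (-18) 3 1 2 6 1 15 10 0 2 + T (-120) 3 1 2 6 1 15 11 0 1))))) + ((((T (-129) 3 1 2 6 1 15 12 0 0 + (T (-24) 3 1 3 6 0 14 11 2 0 + T (-8) 3 1 3 6 0 15 10 1 1)) + ((T (-52) 3 1 3 6 0 15 11 1 0 + T (-16) 3 1 3 6 0 16 9 0 2) + (T (-44) 3 1 3 6 0 16 10 0 1 + T (-50) 3 1 3 6 0 16 11 0 0))) + ((T (-36) 4 1 0 5 3 13 12 1 1 + (T (-34) 4 1 0 5 3 13 13 1 0 + T (-42) 4 1 0 5 3 14 12 0 1))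 + ((T (-41) 4 1 0 5 3 14 13 0 0 + T (-42) 4 1 1 5 2 13 12 2 0) + (T (-48) 4 1 1 5 2 14 11 1 1 + T (-136) 4 1 1 5 2 14 12 1 0)))) + (((T (-42) 4 1 1 5 2 15 10 0 2 + (T (-144) 4 1 1 5 2 15 11 0 1 + T (-151) 4 1 1 5 2 15 12 0 0)) + ((T (-48) 4 1 2 5 1 14 11 2 0 + T (-60) 4 1 2 5 1 15 10 1 1) + (T (-170) 4 1 2 5 1 15 11 1 0 + T (-48) 4 1 2 5 1 16 9 0 2))) + ((T (-162) 4 1 2 5 1 16 10 0 1 + (T (-179) 4 1 2 5 1 16 11 0 0 + T (-6) 4 1 3 5 0 15 10 2 0)) + ((T (-48) 4 1 3 5 0 16 9 1 1 + T (-68) 4 1 3 5 0 16 10 1 0) + (T (-6) 4 1 3 5 0 17 8 0 2 + T (-60) 4 1 3 5 0 17 9 0 1))))))) + ((((((T (-69) 4 1 3 5 0 17 10 0 0 + (T (-18) 5 1 0 4 3 13 12 2 0 + T (-40) 5 1 0 4 3 14 12 1 0)) + (T (-18) 5 1 0 4 3 15 10 0 2 + (T (-40) 5 1 0 4 3 15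 11 0 1 + T (-43) 5 1 0 4 3 15 12 0 0))) + ((T (-24) 5 1 1 4 2 14 11 2 0 + (T (-84) 5 1 1 4 2 15 10 1 1 + T (-146) 5 1 1 4 2 15 11 1 0)) + ((T (-24) 5 1 1 4 2 16 9 0 2 + T (-146) 5 1 1 4 2 16 10 0 1) + (T (-157) 5 1 1 4 2 16 11 0 0 + T (-30) 5 1 2 4 1 15 10 2 0)))) + (((T (-96) 5 1 2 4 1 16 9 1 1 + (T (-172) 5 1 2 4 1 16 10 1 0 + T (-30) 5 1 2 4 1 17 8 0 2)) + ((T (-172) 5 1 2 4 1 17 9 0 1 + T (-185) 5 1 2 4 1 17 10 0 0) + (T (-24) 5 1 3 4 0 16 9 2 0 + T (-12) 5 1 3 4 0 17 8 1 1))) + ((T (-66) 5 1 3 4 0 17 9 1 0 + (T (-24) 5 1 3 4 0 18 7 0 2 + T (-66) 5 1 3 4 0 18 8 0 1)) + ((T (-71) 5 1 3 4 0 18 9 0 0 + T (-32) 6 1 0 3 3 15 10 1 1) + (T (-36) 6 1 0 3 3 15 11 1 0 + T (-28) 6 1 0 3 3 16 10 0 1))))) + ((((T (-34) 6 1 0 3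 3 16 11 0 0 + (T (-38) 6 1 1 3 2 15 10 2 0 + T (-40) 6 1 1 3 2 16 9 1 1)) + ((T (-120) 6 1 1 3 2 16 10 1 0 + T (-38) 6 1 1 3 2 17 8 0 2) + (T (-112) 6 1 1 3 2 17 9 0 1 + T (-123) 6 1 1 3 2 17 10 0 0))) + ((T (-40) 6 1 2 3 1 16 9 2 0 + (T (-56) 6 1 2 3 1 17 8 1 1 + T (-132) 6 1 2 3 1 17 9 1 0)) + ((T (-40) 6 1 2 3 1 18 7 0 2 + T (-140) 6 1 2 3 1 18 8 0 1) + (T (-144) 6 1 2 3 1 18 9 0 0 + T (-6) 6 1 3 3 0 17 8 2 0)))) + (((T (-40) 6 1 3 3 0 18 7 1 1 + (T (-48) 6 1 3 3 0 18 8 1 0 + T (-6) 6 1 3 3 0 19 6 0 2)) + ((T (-56) 6 1 3 3 0 19 7 0 1 + T (-55) 6 1 3 3 0 19 8 0 0) + (T (-14) 7 1 0 2 3 15 10 2 0 + T (-24) 7 1 0 2 3 16 10 1 0))) + ((T (-6) 7 1 0 2 3 17 8 0 2 + (T (-16) 7 1 0 2 3 17 9 0 1 + T (-19) 7 1 0 2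 3 17 10 0 0)) + ((T (-16) 7 1 1 2 2 16 9 2 0 + T (-48) 7 1 1 2 2 17 8 1 1) + (T (-76) 7 1 1 2 2 17 9 1 0 + T (-8) 7 1 1 2 2 18 7 0 2)))))) + (((((T (-68) 7 1 1 2 2 18 8 0 1 + (T (-68) 7 1 1 2 2 18 9 0 0 + T (-14) 7 1 2 2 1 17 8 2 0)) + (T (-48) 7 1 2 2 1 18 7 1 1 + (T (-80) 7 1 2 2 1 18 8 1 0 + T (-22) 7 1 2 2 1 19 6 0 2))) + ((T (-88) 7 1 2 2 1 19 7 0 1 + (T (-79) 7 1 2 2 1 19 8 0 0 + T (-8) 7 1 3 2 0 18 7 2 0)) + ((T (-8) 7 1 3 2 0 19 6 1 1 + T (-28) 7 1 3 2 0 19 7 1 0) + (T (-16) 7 1 3 2 0 20 5 0 2 + T (-36) 7 1 3 2 0 20 6 0 1)))) + (((T (-30) 7 1 3 2 0 20 7 0 0 + (T (-10) 8 1 0 1 3 17 8 1 1 + T (-13) 8 1 0 1 3 17 9 1 0)) + ((T (-5) 8 1 0 1 3 18 8 0 1 + T (-7) 8 1 0 1 3 18 9 0 0) + (T (-12) 8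 1 1 1 2 17 8 2 0 + T (-12) 8 1 1 1 2 18 7 1 1))) + ((T (-36) 8 1 1 1 2 18 8 1 0 + (T (-12) 8 1 1 1 2 19 6 0 2 + T (-28) 8 1 1 1 2 19 7 0 1)) + ((T (-23) 8 1 1 1 2 19 8 0 0 + T (-12) 8 1 2 1 1 18 7 2 0) + (T (-18) 8 1 2 1 1 19 6 1 1 + T (-33) 8 1 2 1 1 19 7 1 0))))) + ((((T (-12) 8 1 2 1 1 20 5 0 2 + (T (-41) 8 1 2 1 1 20 6 0 1 + T (-27) 8 1 2 1 1 20 7 0 0)) + ((T (-2) 8 1 3 1 0 19 6 2 0 + T (-12) 8 1 3 1 0 20 5 1 1) + (T (-10) 8 1 3 1 0 20 6 1 0 + T (-2) 8 1 3 1 0 21 4 0 2))) + ((T (-18) 8 1 3 1 0 21 5 0 1 + (T (-10) 8 1 3 1 0 21 6 0 0 + T (-4) 9 1 0 0 3 17 8 2 0)) + ((T (-4) 9 1 0 0 3 18 8 1 0 + T (-1) 9 1 0 0 3 19 8 0 0) + (T (-4) 9 1 1 0 2 18 7 2 0 + T (-10) 9 1 1 0 2 19 6 1 1)))) + (((T (-9)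 9 1 1 0 2 19 7 1 0 + (T (-5) 9 1 1 0 2 20 6 0 1 + T (-4) 9 1 1 0 2 20 7 0 0)) + ((T (-2) 9 1 2 0 1 19 6 2 0 + T (-8) 9 1 2 0 1 20 5 1 1) + (T (-6) 9 1 2 0 1 20 6 1 0 + T (-6) 9 1 2 0 1 21 4 0 2))) + ((T (-10) 9 1 2 0 1 21 5 0 1 + (T (-4) 9 1 2 0 1 21 6 0 0 + T (-2) 9 1 3 0 0 21 4 1 1)) + ((T (-1) 9 1 3 0 0 21 5 1 0 + T (-4) 9 1 3 0 0 22 3 0 2) + (T (-5) 9 1 3 0 0 22 4 0 1 + T (-2) 9 1 3 0 0 22 5 0 0))))))))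
def UmF : Fin 4 → S₁₃ := ![Um0, Um1, Um2, Um3]
def tpF : Fin 4 → S₁₃ := ![tp0, tp1, tp2, tp3]
def qpm0 : S₁₃ := monomial (Finsupp.single (1 : Fin 9) 1 + Finsupp.single (2 : Fin 9) 1 + Finsupp.single (3 : Fin 9) 9 + Finsupp.single (4 : Fin 9) 2 + Finsupp.single (5 : Fin 9) 12 + Finsupp.single (6 : Fin 9) 15) (2 : ℤ) + monomial (Finsupp.single (0 : Fin 9) 1 + Finsupp.single (1 : Fin 9) 1 + Finsupp.single (3 : Fin 9) 8 + Finsupp.single (4 : Fin 9) 3 + Finsupp.single (5 : Fin 9) 12 + Finsupp.single (6 : Fin 9) 15) (2 : ℤ) + monomial (Finsupp.single (1 : Fin 9) 1 + Finsupp.single (2 : Fin 9) 3 + Finsupp.single (3 : Fin 9) 9 + Finsupp.single (5 : Fin 9) 14 + Finsupp.single (6 : Fin 9) 13) (2 : ℤ) + monomial (Finsupp.single (0 : Fin 9) 1 + Finsupp.single (1 : Fin 9) 1 + Finsupp.single (2 : Fin 9) 2 + Finsupp.single (3 : Fin 9) 8 + Finsupp.single (4 : Fin 9) 1 + Finsupp.single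 (5 : Fin 9) 14 + Finsupp.single (6 : Fin 9) 13) (2 : ℤ) + monomial (Finsupp.single (0 : Fin 9) 8 + Finsupp.single (1 : Fin 9) 1 + Finsupp.single (2 : Fin 9) 1 + Finsupp.single (3 : Fin 9) 1 + Finsupp.single (4 : Fin 9) 2 + Finsupp.single (5 : Fin 9) 20 + Finsupp.single (6 : Fin 9) 7) (2 : ℤ) + monomial (Finsupp.single (0 : Fin 9) 9 + Finsupp.single (1 : Fin 9) 1 + Finsupp.single (4 : Fin 9) 3 + Finsupp.single (5 : Fin 9) 20 + Finsupp.single (6 : Fin 9) 7) (2 : ℤ) + monomial (Finsupp.single (0 : Fin 9) 8 + Finsupp.single (1 : Fin 9) 1 + Finsupp.single (2 : Fin 9) 3 + Finsupp.single (3 : Fin 9) 1 + Finsupp.single (5 : Fin 9) 22 + Finsupp.single (6 : Fin 9) 5) (2 : ℤ) + monomial (Finsupp.single (0 : Fin 9) 9 + Finsupp.single (1 : Fin 9) 1 + Finsupp.single (2 : Fin 9) 2 + Finsupp.single (4 : Fin 9) 1 + Finsupp.single (5 : Fin 9) 22 + Finsupp.single (6 : Fin 9) 5) (2 : ℤ)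
def qpm1 : S₁₃ := monomial (Finsupp.single (1 : Fin 9) 1 + Finsupp.single (3 : Fin 9) 9 + Finsupp.single (4 : Fin 9) 3 + Finsupp.single (5 : Fin 9) 10 + Finsupp.single (6 : Fin 9) 17) (2 : ℤ) + monomial (Finsupp.single (1 : Fin 9) 1 + Finsupp.single (2 : Fin 9) 2 + Finsupp.single (3 : Fin 9) 9 + Finsupp.single (4 : Fin 9) 1 + Finsupp.single (5 : Fin 9) 12 + Finsupp.single (6 : Fin 9) 15) (2 : ℤ) + monomial (Finsupp.single (0 : Fin 9) 1 + Finsupp.single (1 : Fin 9) 1 + Finsupp.single (2 : Fin 9) 1 + Finsupp.single (3 : Fin 9) 8 + Finsupp.single (4 : Fin 9) 2 + Finsupp.single (5 : Fin 9) 12 + Finsupp.single (6 : Fin 9) 15) (2 : ℤ) + monomial (Finsupp.single (0 : Fin 9) 1 + Finsupp.single (1 : Fin 9) 1 + Finsupp.single (2 : Fin 9) 3 + Finsupp.single (3 : Fin 9) 8 + Finsupp.single (5 : Fin 9) 14 + Finsupp.single (6 : Fin 9) 13) (2 : ℤ) + monomial (Finsupp.single (0 : Fin 9) 8 + Finsupp.single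 (1 : Fin 9) 1 + Finsupp.single (3 : Fin 9) 1 + Finsupp.single (4 : Fin 9) 3 + Finsupp.single (5 : Fin 9) 18 + Finsupp.single (6 : Fin 9) 9) (2 : ℤ) + monomial (Finsupp.single (0 : Fin 9) 8 + Finsupp.single (1 : Fin 9) 1 + Finsupp.single (2 : Fin 9) 2 + Finsupp.single (3 : Fin 9) 1 + Finsupp.single (4 : Fin 9) 1 + Finsupp.single (5 : Fin 9) 20 + Finsupp.single (6 : Fin 9) 7) (2 : ℤ) + monomial (Finsupp.single (0 : Fin 9) 9 + Finsupp.single (1 : Fin 9) 1 + Finsupp.single (2 : Fin 9) 1 + Finsupp.single (4 : Fin 9) 2 + Finsupp.single (5 : Fin 9) 20 + Finsupp.single (6 : Fin 9) 7) (2 : ℤ) + monomial (Finsupp.single (0 : Fin 9) 9 + Finsupp.single (1 : Fin 9) 1 + Finsupp.single (2 : Fin 9) 3 + Finsupp.single (5 : Fin 9) 22 + Finsupp.single (6 : Fin 9) 5) (2 : ℤ)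


lemma eval_dvd_sub {A : Type} [CommRing A] {σ : Type} (r : A) {g g' : σ → A}
    (h : ∀ j, r ∣ g j - g' j) (p : MvPolynomial σ A) :
    r ∣ eval g p - eval g' p := by
  induction p using MvPolynomial.induction_on with
  | C c => simp
  | add p q hp hq => simpa [add_sub_add_comm] using dvd_add hp hq
  | mul_X p i hp =>
      have key : eval g p * g i - eval g' p * g' i
          = eval g p * (g i - g' i) + (eval g p - eval g' p) * g' i := by ring
      simp only [map_mul, eval_X, key]
      exact dvd_add (Dvd.dvd.mul_left (h i) _) (hp.mul_right _)

lemma slice_coeff (p : S₁₃) (d : ℕ) (n : Fin 9 →₀ ℕ) :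
    coeff n (∑ m ∈ p.support.filter (fun m => m 6 = d), monomial m (coeff m p))
      = if n 6 = d then coeff n p else 0 := by
  classical
  rw [MvPolynomial.coeff_sum]
  simp only [coeff_monomial]
  rw [Finset.sum_ite_eq']
  simp only [Finset.mem_filter, mem_support_iff]
  by_cases h1 : coeff n p = 0
  · simp [h1]
  · simp [h1]

lemma ne_of_deg6 {d n : Fin 9 →₀ ℕ} {v : ℕ} (hd : d 6 = v) (hn : n 6 ≠ v) : d ≠ n :=
  fun h => hn (h ▸ hd)

lemma stageA_0 : eval (![X 5 + 2 * X 7, X 6 + 2 * X 8, 0, 0] : Fin 4 → S₁₃) (sig3 ![X 0, X 1, X 2, X 3, X 4] 0) = Um0 + 4 * Uj0 := by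
  simp [sig1, sig2, sig3, cub, T, UmF, tpF, Um0, Um1, Um2, Um3, Uj0, Uj1, Uj2, Uj3, tp0, tp1, tp2, tp3, dd0, dd1, dd2, dd3, qp0, qp1, ee0, ee1, pderiv_mul, pderiv_X, pderiv_C, Pi.single_apply]
  try ring

lemma stageA_1 : eval (![X 5 + 2 * X 7, X 6 + 2 * X 8, 0, 0] : Fin 4 → S₁₃) (sig3 ![X 0, X 1, X 2, X 3, X 4] 1) = Um1 + 4 * Uj1 := by
  simp [sig1, sig2, sig3, cub, T, UmF, tpF, Um0, Um1, Um2, Um3, Uj0, Uj1, Uj2, Uj3, tp0, tp1, tp2, tp3, dd0, dd1, dd2, dd3, qp0, qp1, ee0, ee1, pderiv_mul, pderiv_X, pderiv_C, Pi.single_apply]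
  try ring

lemma stageA_2 : eval (![X 5 + 2 * X 7, X 6 + 2 * X 8, 0, 0] : Fin 4 → S₁₃) (sig3 ![X 0, X 1, X 2, X 3, X 4] 2) = Um2 + 4 * Uj2 := by
  simp [sig1, sig2, sig3, cub, T, UmF, tpF, Um0, Um1, Um2, Um3, Uj0, Uj1, Uj2, Uj3, tp0, tp1, tp2, tp3, dd0, dd1, dd2, dd3, qp0, qp1, ee0, ee1, pderiv_mul, pderiv_X, pderiv_C, Pi.single_apply]
  try ring

lemma stageA_3 : eval (![X 5 + 2 * X 7, X 6 + 2 * X 8, 0, 0] : Fin 4 → S₁₃) (sig3 ![X 0, X 1, X 2, X 3, X 4] 3) = Um3 + 4 * Uj3 := by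
  simp [sig1, sig2, sig3, cub, T, UmF, tpF, Um0, Um1, Um2, Um3, Uj0, Uj1, Uj2, Uj3, tp0, tp1, tp2, tp3, dd0, dd1, dd2, dd3, qp0, qp1, ee0, ee1, pderiv_mul, pderiv_X, pderiv_C, Pi.single_apply]
  try ring

lemma stageB_0 : eval UmF (sig2 ![X 0, X 1, X 2, X 3, X 4] 0) = tp0 + 4 * dd0 := by
  simp [sig1, sig2, sig3, cub, T, UmF, tpF, Um0, Um1, Um2, Um3, Uj0, Uj1, Uj2, Uj3, tp0, tp1, tp2, tp3, dd0, dd1, dd2, dd3, qp0, qp1, ee0, ee1, pderiv_mul, pderiv_X, pderiv_C, Pi.single_apply]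
  try ring

lemma stageB_1 : eval UmF (sig2 ![X 0, X 1, X 2, X 3, X 4] 1) = tp1 + 4 * dd1 := by
  simp [sig1, sig2, sig3, cub, T, UmF, tpF, Um0, Um1, Um2, Um3, Uj0, Uj1, Uj2, Uj3, tp0, tp1, tp2, tp3, dd0, dd1, dd2, dd3, qp0, qp1, ee0, ee1, pderiv_mul, pderiv_X, pderiv_C, Pi.single_apply]
  try ring

lemma stageB_2 : eval UmF (sig2 ![X 0, X 1, X 2, X 3, X 4] 2) = tp2 + 4 * dd2 := by
  simp [sig1, sig2, sig3, cub, T, UmF, tpF, Um0, Um1, Um2, Um3, Uj0, Uj1, Uj2, Uj3, tp0, tp1, tp2, tp3, dd0, dd1, dd2, dd3, qp0, qp1, ee0, ee1, pderiv_mul, pderiv_X, pderiv_C, Pi.single_apply]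
  try ring

lemma stageB_3 : eval UmF (sig2 ![X 0, X 1, X 2, X 3, X 4] 3) = tp3 + 4 * dd3 := by
  simp [sig1, sig2, sig3, cub, T, UmF, tpF, Um0, Um1, Um2, Um3, Uj0, Uj1, Uj2, Uj3, tp0, tp1, tp2, tp3, dd0, dd1, dd2, dd3, qp0, qp1, ee0, ee1, pderiv_mul, pderiv_X, pderiv_C, Pi.single_apply]
  try ring

lemma stageC_0 : eval tpF (sig1 ![X 0, X 1, X 2, X 3, X 4] 0) = qp0 + 4 * ee0 := by
  simp [sig1, sig2, sig3, cub, T, UmF, tpF, Um0, Um1, Um2, Um3, Uj0, Uj1, Uj2, Uj3, tp0, tp1, tp2, tp3, dd0, dd1, dd2, dd3, qp0, qp1, ee0, ee1, pderiv_mul, pderiv_X, pderiv_C, Pi.single_apply]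
  try ring

lemma stageC_1 : eval tpF (sig1 ![X 0, X 1, X 2, X 3, X 4] 1) = qp1 + 4 * ee1 := by
  simp [sig1, sig2, sig3, cub, T, UmF, tpF, Um0, Um1, Um2, Um3, Uj0, Uj1, Uj2, Uj3, tp0, tp1, tp2, tp3, dd0, dd1, dd2, dd3, qp0, qp1, ee0, ee1, pderiv_mul, pderiv_X, pderiv_C, Pi.single_apply]
  try ring

lemma convQ0 : qp0 = qpm0 := by
  simp only [qp0, qpm0]
  simp only [T, X_pow_eq_monomial, C_mul_monomial, monomial_mul, Finsupp.single_zero, mul_one, one_mul, add_zero, zero_add]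
  abel

lemma convQ1 : qp1 = qpm1 := by
  simp only [qp1, qpm1]
  simp only [T, X_pow_eq_monomial, C_mul_monomial, monomial_mul, Finsupp.single_zero, mul_one, one_mul, add_zero, zero_add]
  abel
lemma dg0_0 : ((Finsupp.single (1 : Fin 9) 1 + Finsupp.single (2 : Fin 9) 1 + Finsupp.single (3 : Fin 9) 9 + Finsupp.single (4 : Fin 9) 2 + Finsupp.single (5 : Fin 9) 12 + Finsupp.single (6 : Fin 9) 15) : Fin 9 →₀ ℕ) 6 = 15 := by
  simp [Finsupp.single_apply]
lemma dg0_1 : ((Finsupp.single (0 : Fin 9) 1 + Finsupp.single (1 : Fin 9) 1 + Finsupp.single (3 : Fin 9) 8 + Finsupp.single (4 : Fin 9) 3 + Finsupp.single (5 : Fin 9) 12 + Finsupp.single (6 : Fin 9) 15) : Fin 9 →₀ ℕ) 6 = 15 := by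
  simp [Finsupp.single_apply]
lemma dg0_2 : ((Finsupp.single (1 : Fin 9) 1 + Finsupp.single (2 : Fin 9) 3 + Finsupp.single (3 : Fin 9) 9 + Finsupp.single (5 : Fin 9) 14 + Finsupp.single (6 : Fin 9) 13) : Fin 9 →₀ ℕ) 6 = 13 := by
  simp [Finsupp.single_apply]
lemma dg0_3 : ((Finsupp.single (0 : Fin 9) 1 + Finsupp.single (1 : Fin 9) 1 + Finsupp.single (2 : Fin 9) 2 + Finsupp.single (3 : Fin 9) 8 + Finsupp.single (4 : Fin 9) 1 + Finsupp.single (5 : Fin 9) 14 + Finsupp.single (6 : Fin 9) 13) : Fin 9 →₀ ℕ) 6 = 13 := by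
  simp [Finsupp.single_apply]
lemma dg0_4 : ((Finsupp.single (0 : Fin 9) 8 + Finsupp.single (1 : Fin 9) 1 + Finsupp.single (2 : Fin 9) 1 + Finsupp.single (3 : Fin 9) 1 + Finsupp.single (4 : Fin 9) 2 + Finsupp.single (5 : Fin 9) 20 + Finsupp.single (6 : Fin 9) 7) : Fin 9 →₀ ℕ) 6 = 7 := by
  simp [Finsupp.single_apply]
lemma dg0_5 : ((Finsupp.single (0 : Fin 9) 9 + Finsupp.single (1 : Fin 9) 1 + Finsupp.single (4 : Fin 9) 3 + Finsupp.single (5 : Fin 9) 20 + Finsupp.single (6 : Fin 9) 7) : Fin 9 →₀ ℕ) 6 = 7 := by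
  simp [Finsupp.single_apply]
lemma dg0_6 : ((Finsupp.single (0 : Fin 9) 8 + Finsupp.single (1 : Fin 9) 1 + Finsupp.single (2 : Fin 9) 3 + Finsupp.single (3 : Fin 9) 1 + Finsupp.single (5 : Fin 9) 22 + Finsupp.single (6 : Fin 9) 5) : Fin 9 →₀ ℕ) 6 = 5 := by
  simp [Finsupp.single_apply]
lemma dg0_7 : ((Finsupp.single (0 : Fin 9) 9 + Finsupp.single (1 : Fin 9) 1 + Finsupp.single (2 : Fin 9) 2 + Finsupp.single (4 : Fin 9) 1 + Finsupp.single (5 : Fin 9) 22 + Finsupp.single (6 : Fin 9) 5) : Fin 9 →₀ ℕ) 6 = 5 := by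
  simp [Finsupp.single_apply]
lemma dg1_0 : ((Finsupp.single (1 : Fin 9) 1 + Finsupp.single (3 : Fin 9) 9 + Finsupp.single (4 : Fin 9) 3 + Finsupp.single (5 : Fin 9) 10 + Finsupp.single (6 : Fin 9) 17) : Fin 9 →₀ ℕ) 6 = 17 := by
  simp [Finsupp.single_apply]
lemma dg1_1 : ((Finsupp.single (1 : Fin 9) 1 + Finsupp.single (2 : Fin 9) 2 + Finsupp.single (3 : Fin 9) 9 + Finsupp.single (4 : Fin 9) 1 + Finsupp.single (5 : Fin 9) 12 + Finsupp.single (6 : Fin 9) 15) : Fin 9 →₀ ℕ) 6 = 15 := by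
  simp [Finsupp.single_apply]
lemma dg1_2 : ((Finsupp.single (0 : Fin 9) 1 + Finsupp.single (1 : Fin 9) 1 + Finsupp.single (2 : Fin 9) 1 + Finsupp.single (3 : Fin 9) 8 + Finsupp.single (4 : Fin 9) 2 + Finsupp.single (5 : Fin 9) 12 + Finsupp.single (6 : Fin 9) 15) : Fin 9 →₀ ℕ) 6 = 15 := by
  simp [Finsupp.single_apply]
lemma dg1_3 : ((Finsupp.single (0 : Fin 9) 1 + Finsupp.single (1 : Fin 9) 1 + Finsupp.single (2 : Fin 9) 3 + Finsupp.single (3 : Fin 9) 8 + Finsupp.single (5 : Fin 9) 14 + Finsupp.single (6 : Fin 9) 13) : Fin 9 →₀ ℕ) 6 = 13 := by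
  simp [Finsupp.single_apply]
lemma dg1_4 : ((Finsupp.single (0 : Fin 9) 8 + Finsupp.single (1 : Fin 9) 1 + Finsupp.single (3 : Fin 9) 1 + Finsupp.single (4 : Fin 9) 3 + Finsupp.single (5 : Fin 9) 18 + Finsupp.single (6 : Fin 9) 9) : Fin 9 →₀ ℕ) 6 = 9 := by
  simp [Finsupp.single_apply]
lemma dg1_5 : ((Finsupp.single (0 : Fin 9) 8 + Finsupp.single (1 : Fin 9) 1 + Finsupp.single (2 : Fin 9) 2 + Finsupp.single (3 : Fin 9) 1 + Finsupp.single (4 : Fin 9) 1 + Finsupp.single (5 : Fin 9) 20 + Finsupp.single (6 : Fin 9) 7) : Fin 9 →₀ ℕ) 6 = 7 := by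
  simp [Finsupp.single_apply]
lemma dg1_6 : ((Finsupp.single (0 : Fin 9) 9 + Finsupp.single (1 : Fin 9) 1 + Finsupp.single (2 : Fin 9) 1 + Finsupp.single (4 : Fin 9) 2 + Finsupp.single (5 : Fin 9) 20 + Finsupp.single (6 : Fin 9) 7) : Fin 9 →₀ ℕ) 6 = 7 := by
  simp [Finsupp.single_apply]
lemma dg1_7 : ((Finsupp.single (0 : Fin 9) 9 + Finsupp.single (1 : Fin 9) 1 + Finsupp.single (2 : Fin 9) 3 + Finsupp.single (5 : Fin 9) 22 + Finsupp.single (6 : Fin 9) 5) : Fin 9 →₀ ℕ) 6 = 5 := by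
  simp [Finsupp.single_apply]

theorem stmt_13
    (w : S₁₃) (hw : w = X 0 * X 4 + X 2 * X 3)
    (q : Fin 4 → S₁₃)
    (hq : q = Gmap ![X 0, X 1, X 2, X 3, X 4] ![X 5 + 2 * X 7, X 6 + 2 * X 8, 0, 0]) :
    -- (i)
    ((∀ m : Fin 9 →₀ ℕ, 15 < m 6 → (4 : ℤ) ∣ coeff m (q 0)) ∧
      (4 : S₁₃) ∣
        ((∑ m ∈ (q 0).support.filter (fun m => m 6 = 15), monomial m (coeff m (q 0))) -
          2 * w * X 1 * X 3 ^ 8 * X 4 ^ 2 * X 5 ^ 12 * X 6 ^ 15)) ∧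
    -- (ii)
    ((∀ m : Fin 9 →₀ ℕ, 17 < m 6 → (4 : ℤ) ∣ coeff m (q 1)) ∧
      (4 : S₁₃) ∣
        ((∑ m ∈ (q 1).support.filter (fun m => m 6 = 17), monomial m (coeff m (q 1))) -
          2 * X 1 * X 3 ^ 9 * X 4 ^ 3 * X 5 ^ 10 * X 6 ^ 17)) := by
  classical
  have hGm : ∀ i, q i = eval (fun j => eval (fun k => eval (![X 5 + 2 * X 7, X 6 + 2 * X 8, 0, 0] : Fin 4 → S₁₃) (sig3 ![X 0, X 1, X 2, X 3, X 4] k)) (sig2 ![X 0, X 1, X 2, X 3, X 4] j)) (sig1 ![X 0, X 1, X 2, X 3, X 4] i) := by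
    intro i; rw [hq]; rfl
  have stA : ∀ k, (4 : S₁₃) ∣ eval (![X 5 + 2 * X 7, X 6 + 2 * X 8, 0, 0] : Fin 4 → S₁₃) (sig3 ![X 0, X 1, X 2, X 3, X 4] k) - UmF k := by
    have h0 : (4 : S₁₃) ∣ eval (![X 5 + 2 * X 7, X 6 + 2 * X 8, 0, 0] : Fin 4 → S₁₃) (sig3 ![X 0, X 1, X 2, X 3, X 4] 0) - UmF 0 :=
      ⟨Uj0, by simp only [UmF]; rw [stageA_0]; simp; try ring⟩
    have h1 : (4 : S₁₃) ∣ eval (![X 5 + 2 * X 7, X 6 + 2 * X 8, 0, 0] : Fin 4 → S₁₃) (sig3 ![X 0, X 1, X 2, X 3, X 4] 1) - UmF 1 :=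
      ⟨Uj1, by simp only [UmF]; rw [stageA_1]; simp; try ring⟩
    have h2 : (4 : S₁₃) ∣ eval (![X 5 + 2 * X 7, X 6 + 2 * X 8, 0, 0] : Fin 4 → S₁₃) (sig3 ![X 0, X 1, X 2, X 3, X 4] 2) - UmF 2 :=
      ⟨Uj2, by simp only [UmF]; rw [stageA_2]; simp; try ring⟩
    have h3 : (4 : S₁₃) ∣ eval (![X 5 + 2 * X 7, X 6 + 2 * X 8, 0, 0] : Fin 4 → S₁₃) (sig3 ![X 0, X 1, X 2, X 3, X 4] 3) - UmF 3 :=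
      ⟨Uj3, by simp only [UmF]; rw [stageA_3]; simp; try ring⟩
    intro k
    fin_cases k
    · exact h0
    · exact h1
    · exact h2
    · exact h3
  have stB : ∀ j, (4 : S₁₃) ∣ eval (fun k => eval (![X 5 + 2 * X 7, X 6 + 2 * X 8, 0, 0] : Fin 4 → S₁₃) (sig3 ![X 0, X 1, X 2, X 3, X 4] k)) (sig2 ![X 0, X 1, X 2, X 3, X 4] j) - tpF j := by
    intro j
    have h1 : (4 : S₁₃) ∣ eval (fun k => eval (![X 5 + 2 * X 7, X 6 + 2 * X 8, 0, 0] : Fin 4 → S₁₃) (sig3 ![X 0, X 1, X 2, X 3, X 4] k)) (sig2 ![X 0, X 1, X 2, X 3, X 4] j)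
        - eval UmF (sig2 ![X 0, X 1, X 2, X 3, X 4] j) := eval_dvd_sub 4 stA _
    have h2 : (4 : S₁₃) ∣ eval UmF (sig2 ![X 0, X 1, X 2, X 3, X 4] j) - tpF j := by
      have g0 : (4 : S₁₃) ∣ eval UmF (sig2 ![X 0, X 1, X 2, X 3, X 4] 0) - tpF 0 :=
        ⟨dd0, by simp only [tpF]; rw [stageB_0]; simp; try ring⟩
      have g1 : (4 : S₁₃) ∣ eval UmF (sig2 ![X 0, X 1, X 2, X 3, X 4] 1) - tpF 1 :=
        ⟨dd1, by simp only [tpF]; rw [stageB_1]; simp; try ring⟩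
      have g2 : (4 : S₁₃) ∣ eval UmF (sig2 ![X 0, X 1, X 2, X 3, X 4] 2) - tpF 2 :=
        ⟨dd2, by simp only [tpF]; rw [stageB_2]; simp; try ring⟩
      have g3 : (4 : S₁₃) ∣ eval UmF (sig2 ![X 0, X 1, X 2, X 3, X 4] 3) - tpF 3 :=
        ⟨dd3, by simp only [tpF]; rw [stageB_3]; simp; try ring⟩
      fin_cases j
      · exact g0
      · exact g1
      · exact g2
      · exact g3
    simpa using dvd_add h1 h2
  have KEY0 : (4 : S₁₃) ∣ q 0 - qpm0 := by
    rw [hGm 0, ← convQ0]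
    have h1 := eval_dvd_sub 4 stB (sig1 ![X 0, X 1, X 2, X 3, X 4] 0)
    have h2 : (4 : S₁₃) ∣ eval tpF (sig1 ![X 0, X 1, X 2, X 3, X 4] 0) - qp0 := ⟨ee0, by rw [stageC_0]; ring⟩
    simpa using dvd_add h1 h2
  have KEY1 : (4 : S₁₃) ∣ q 1 - qpm1 := by
    rw [hGm 1, ← convQ1]
    have h1 := eval_dvd_sub 4 stB (sig1 ![X 0, X 1, X 2, X 3, X 4] 1)
    have h2 : (4 : S₁₃) ∣ eval tpF (sig1 ![X 0, X 1, X 2, X 3, X 4] 1) - qp1 := ⟨ee1, by rw [stageC_1]; ring⟩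
    simpa using dvd_add h1 h2
  obtain ⟨z0, hz0⟩ := KEY0
  obtain ⟨z1, hz1⟩ := KEY1
  have hq0' : q 0 = qpm0 + 4 * z0 := by linear_combination hz0
  have hq1' : q 1 = qpm1 + 4 * z1 := by linear_combination hz1
  have h4C : (4 : S₁₃) = C (4 : ℤ) := by norm_num
  have hA : (monomial (Finsupp.single (0 : Fin 9) 1 + Finsupp.single (1 : Fin 9) 1 + Finsupp.single (3 : Fin 9) 8 + Finsupp.single (4 : Fin 9) 3 + Finsupp.single (5 : Fin 9) 12 + Finsupp.single (6 : Fin 9) 15) (2 : ℤ) : S₁₃)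
      = C (2 : ℤ) * X 0 ^ 1 * X 1 ^ 1 * X 3 ^ 8 * X 4 ^ 3 * X 5 ^ 12 * X 6 ^ 15 := by
    simp only [T, X_pow_eq_monomial, C_mul_monomial, monomial_mul, Finsupp.single_zero, mul_one, one_mul, add_zero, zero_add]
  have hB : (monomial (Finsupp.single (1 : Fin 9) 1 + Finsupp.single (2 : Fin 9) 1 + Finsupp.single (3 : Fin 9) 9 + Finsupp.single (4 : Fin 9) 2 + Finsupp.single (5 : Fin 9) 12 + Finsupp.single (6 : Fin 9) 15) (2 : ℤ) : S₁₃)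
      = C (2 : ℤ) * X 1 ^ 1 * X 2 ^ 1 * X 3 ^ 9 * X 4 ^ 2 * X 5 ^ 12 * X 6 ^ 15 := by
    simp only [T, X_pow_eq_monomial, C_mul_monomial, monomial_mul, Finsupp.single_zero, mul_one, one_mul, add_zero, zero_add]
  have hC : (monomial (Finsupp.single (1 : Fin 9) 1 + Finsupp.single (3 : Fin 9) 9 + Finsupp.single (4 : Fin 9) 3 + Finsupp.single (5 : Fin 9) 10 + Finsupp.single (6 : Fin 9) 17) (2 : ℤ) : S₁₃)
      = C (2 : ℤ) * X 1 ^ 1 * X 3 ^ 9 * X 4 ^ 3 * X 5 ^ 10 * X 6 ^ 17 := by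
    simp only [T, X_pow_eq_monomial, C_mul_monomial, monomial_mul, Finsupp.single_zero, mul_one, one_mul, add_zero, zero_add]
  have hW0 : 2 * w * X 1 * X 3 ^ 8 * X 4 ^ 2 * X 5 ^ 12 * X 6 ^ 15
      = monomial (Finsupp.single (0 : Fin 9) 1 + Finsupp.single (1 : Fin 9) 1 + Finsupp.single (3 : Fin 9) 8 + Finsupp.single (4 : Fin 9) 3 + Finsupp.single (5 : Fin 9) 12 + Finsupp.single (6 : Fin 9) 15) (2 : ℤ) + monomial (Finsupp.single (1 : Fin 9) 1 + Finsupp.single (2 : Fin 9) 1 + Finsupp.single (3 : Fin 9) 9 + Finsupp.single (4 : Fin 9) 2 + Finsupp.single (5 : Fin 9) 12 + Finsupp.single (6 : Fin 9) 15) (2 : ℤ) := by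
    rw [hw, hA, hB]
    simp only [map_ofNat]
    ring
  have hW1 : 2 * X 1 * X 3 ^ 9 * X 4 ^ 3 * X 5 ^ 10 * X 6 ^ 17
      = (monomial (Finsupp.single (1 : Fin 9) 1 + Finsupp.single (3 : Fin 9) 9 + Finsupp.single (4 : Fin 9) 3 + Finsupp.single (5 : Fin 9) 10 + Finsupp.single (6 : Fin 9) 17) (2 : ℤ) : S₁₃) := by
    rw [hC]
    simp only [map_ofNat]
    ring
  refine ⟨⟨?_, ?_⟩, ?_, ?_⟩
  · intro m hm
    rw [hq0', coeff_add, h4C, coeff_C_mul]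
    have hz : coeff m qpm0 = 0 := by
      simp only [qpm0, coeff_add, coeff_monomial]
      rw [if_neg (ne_of_deg6 dg0_0 (by omega))]
      rw [if_neg (ne_of_deg6 dg0_1 (by omega))]
      rw [if_neg (ne_of_deg6 dg0_2 (by omega))]
      rw [if_neg (ne_of_deg6 dg0_3 (by omega))]
      rw [if_neg (ne_of_deg6 dg0_4 (by omega))]
      rw [if_neg (ne_of_deg6 dg0_5 (by omega))]
      rw [if_neg (ne_of_deg6 dg0_6 (by omega))]
      rw [if_neg (ne_of_deg6 dg0_7 (by omega))]
      norm_num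
    rw [hz]
    exact ⟨coeff m z0, by ring⟩
  · rw [h4C, C_dvd_iff_dvd_coeff]
    intro n
    rw [coeff_sub, slice_coeff, hW0, coeff_add, coeff_monomial, coeff_monomial]
    by_cases h15 : n 6 = 15
    · rw [if_pos h15, hq0', coeff_add, h4C, coeff_C_mul]
      simp only [qpm0, coeff_add, coeff_monomial]
      rw [if_neg (ne_of_deg6 dg0_2 (by omega)), if_neg (ne_of_deg6 dg0_3 (by omega)),
        if_neg (ne_of_deg6 dg0_4 (by omega)), if_neg (ne_of_deg6 dg0_5 (by omega)),
        if_neg (ne_of_deg6 dg0_6 (by omega)), if_neg (ne_of_deg6 dg0_7 (by omega))]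
      exact ⟨coeff n z0, by ring⟩
    · rw [if_neg h15, if_neg (ne_of_deg6 dg0_0 (by omega)), if_neg (ne_of_deg6 dg0_1 (by omega))]
      norm_num
  · intro m hm
    rw [hq1', coeff_add, h4C, coeff_C_mul]
    have hz : coeff m qpm1 = 0 := by
      simp only [qpm1, coeff_add, coeff_monomial]
      rw [if_neg (ne_of_deg6 dg1_0 (by omega))]
      rw [if_neg (ne_of_deg6 dg1_1 (by omega))]
      rw [if_neg (ne_of_deg6 dg1_2 (by omega))]
      rw [if_neg (ne_of_deg6 dg1_3 (by omega))]
      rw [if_neg (ne_of_deg6 dg1_4 (by omega))]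
      rw [if_neg (ne_of_deg6 dg1_5 (by omega))]
      rw [if_neg (ne_of_deg6 dg1_6 (by omega))]
      rw [if_neg (ne_of_deg6 dg1_7 (by omega))]
      norm_num
    rw [hz]
    exact ⟨coeff m z1, by ring⟩
  · rw [h4C, C_dvd_iff_dvd_coeff]
    intro n
    rw [coeff_sub, slice_coeff, hW1, coeff_monomial]
    by_cases h17 : n 6 = 17
    · rw [if_pos h17, hq1', coeff_add, h4C, coeff_C_mul]
      simp only [qpm1, coeff_add, coeff_monomial]
      rw [if_neg (ne_of_deg6 dg1_1 (by omega)), if_neg (ne_of_deg6 dg1_2 (by omega)),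
        if_neg (ne_of_deg6 dg1_3 (by omega)), if_neg (ne_of_deg6 dg1_4 (by omega)),
        if_neg (ne_of_deg6 dg1_5 (by omega)), if_neg (ne_of_deg6 dg1_6 (by omega)),
        if_neg (ne_of_deg6 dg1_7 (by omega))]
      exact ⟨coeff n z1, by ring⟩
    · rw [if_neg h17, if_neg (ne_of_deg6 dg1_0 (by omega))]
      norm_num
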